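/- arXiv:2201.04671 — 6 statements merged into one kernel-verified Lean document; each statement's English description precedes it below -/
import Mathlib

section
/- Let f : [0,∞) → [0,∞) be a non-increasing, locally integrable function and let K > 0 be a constant such that ∫_t^∞ f(τ) dτ ≤ K · f(t) for every t ≥ 0. Then f(t) ≤ f(0) · e^{1 − t/K} for every t ≥ 0. -/
/-!
Write `E t = ∫_t^∞ f`. Since `f` is non-increasing,
`E t - E (t + s) ≥ s f (t + s) ≥ (s / K) E (t + s)`, so `E (t + s) (1 + s / K) ≤ E t`.
Splitting `[0, t]` into `n` equal steps gives `E t (1 + t / (n K))ⁿ ≤ E 0`, and letting `n → ∞`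
yields `E t ≤ E 0 e^{-t/K} ≤ K f 0 e^{-t/K}`. Finally `K f t ≤ ∫_{t-K}^t f ≤ E (t - K)`, which is
where the extra factor `e` comes from.
-/

open MeasureTheory Set Real Filter Topology

theorem le_mul_exp_neg_of_mul_one_add_le {g : ℝ → ℝ} {a : ℝ} (ha : 0 ≤ a)
    (hg : ∀ t s, 0 ≤ t → 0 ≤ s → g (t + s) * (1 + a * s) ≤ g t) {t : ℝ} (ht : 0 ≤ t) :
    g t ≤ g 0 * exp (-(a * t)) := by
  have hiterate (n : ℕ) {s : ℝ} (hs : 0 ≤ s) : g (n * s) * (1 + a * s) ^ n ≤ g 0 := by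
    induction n with
    | zero => simp
    | succ n ih =>
      calc g ((n + 1 : ℕ) * s) * (1 + a * s) ^ (n + 1)
          = g (n * s + s) * (1 + a * s) * (1 + a * s) ^ n := by push_cast; ring_nf
        _ ≤ g (n * s) * (1 + a * s) ^ n :=
          mul_le_mul_of_nonneg_right (hg _ s (by positivity) hs) (by positivity)
        _ ≤ g 0 := ih
  have hlim : Tendsto (fun n : ℕ ↦ g t * (1 + a * t / n) ^ n) atTop (𝓝 (g t * exp (a * t))) :=
    (tendsto_one_add_div_pow_exp (a * t)).const_mul (g t)
  have hbound : g t * exp (a * t) ≤ g 0 := by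
    refine le_of_tendsto hlim (eventually_atTop.2 ⟨1, fun n hn ↦ ?_⟩)
    have hn : (n : ℝ) ≠ 0 := by positivity
    simpa [mul_div_cancel₀ t hn, mul_div_assoc] using hiterate n (s := t / n) (by positivity)
  rwa [exp_neg, ← div_eq_mul_inv, le_div_iff₀ (exp_pos _)]

theorem AntitoneOn.sub_mul_add_integral_Ioi_le {f : ℝ → ℝ} {a b : ℝ} (hf : AntitoneOn f (Icc a b))
    (ha : IntegrableOn f (Ioi a)) (hab : a ≤ b) :
    (b - a) * f b + ∫ x in Ioi b, f x ≤ ∫ x in Ioi a, f x := by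
  have hb : IntegrableOn f (Ioi b) := ha.mono_set (Ioi_subset_Ioi hab)
  rw [← intervalIntegral.integral_interval_add_Ioi ha hb, add_le_add_iff_right,
    ← smul_eq_mul, ← intervalIntegral.integral_const]
  refine intervalIntegral.integral_mono_on hab intervalIntegrable_const
    (AntitoneOn.intervalIntegrable (by rwa [uIcc_of_le hab])) fun x hx ↦ ?_
  exact hf hx (right_mem_Icc.2 hab) hx.2

theorem integral_Ioi_le_mul_exp_neg {f : ℝ → ℝ} {K : ℝ} (hK : 0 < K)
    (hf_mono : AntitoneOn f (Ici 0)) (hf_int : ∀ t, 0 ≤ t → IntegrableOn f (Ioi t))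
    (htail : ∀ t, 0 ≤ t → ∫ τ in Ioi t, f τ ≤ K * f t) {t : ℝ} (ht : 0 ≤ t) :
    ∫ τ in Ioi t, f τ ≤ (∫ τ in Ioi 0, f τ) * exp (-(K⁻¹ * t)) := by
  refine le_mul_exp_neg_of_mul_one_add_le (g := fun t ↦ ∫ τ in Ioi t, f τ) (by positivity)
    (fun t s ht hs ↦ ?_) ht
  have hchunk := (hf_mono.mono ((Icc_subset_Ici_iff (by linarith)).2 ht))
    |>.sub_mul_add_integral_Ioi_le (hf_int t ht) (le_add_of_nonneg_right hs)
  have hK_tail : K⁻¹ * s * ∫ τ in Ioi (t + s), f τ ≤ s * f (t + s) := by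
    calc K⁻¹ * s * ∫ τ in Ioi (t + s), f τ ≤ K⁻¹ * s * (K * f (t + s)) :=
          mul_le_mul_of_nonneg_left (htail _ (by positivity)) (by positivity)
      _ = s * f (t + s) := by field_simp
  simp only [add_sub_cancel_left] at hchunk
  linarith

/-- Komornik's integral decay lemma: a nonnegative, non-increasing, locally integrable
function on `[0, ∞)` whose tail integral `∫_t^∞ f` is bounded by `K · f t` for all `t ≥ 0`
decays exponentially: `f t ≤ f 0 · exp (1 - t / K)`. -/
theorem stmt_0 (f : ℝ → ℝ) (K : ℝ) (hK : 0 < K)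
    (hf_nonneg : ∀ t, 0 ≤ t → 0 ≤ f t)
    (hf_mono : AntitoneOn f (Set.Ici (0 : ℝ)))
    (hf_int : ∀ t, 0 ≤ t → MeasureTheory.IntegrableOn f (Set.Ioi t))
    (htail : ∀ t, 0 ≤ t → ∫ τ in Set.Ioi t, f τ ≤ K * f t) :
    ∀ t, 0 ≤ t → f t ≤ f 0 * Real.exp (1 - t / K) := by
  intro t ht
  rcases le_or_gt t K with htK | hKt
  · calc f t ≤ f 0 := hf_mono self_mem_Ici ht ht
      _ ≤ f 0 * exp (1 - t / K) := by
        refine le_mul_of_one_le_right (hf_nonneg 0 le_rfl) (one_le_exp ?_)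
        linarith [(div_le_one hK).2 htK]
  have hs : 0 ≤ t - K := by linarith
  have hchunk := (hf_mono.mono ((Icc_subset_Ici_iff (by linarith)).2 hs))
    |>.sub_mul_add_integral_Ioi_le (hf_int _ hs) (sub_le_self t hK.le)
  rw [sub_sub_cancel] at hchunk
  have htail_nonneg : 0 ≤ ∫ τ in Ioi t, f τ :=
    setIntegral_nonneg measurableSet_Ioi fun x hx ↦ hf_nonneg x (ht.trans hx.le)
  have hexp : exp (-(K⁻¹ * (t - K))) = exp (1 - t / K) := by
    congr 1; field_simp; ring
  refine le_of_mul_le_mul_left ?_ hK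
  calc K * f t ≤ ∫ τ in Ioi (t - K), f τ := by linarith
    _ ≤ (∫ τ in Ioi 0, f τ) * exp (1 - t / K) :=
      hexp ▸ integral_Ioi_le_mul_exp_neg hK hf_mono hf_int htail hs
    _ ≤ K * f 0 * exp (1 - t / K) :=
      mul_le_mul_of_nonneg_right (htail 0 le_rfl) (exp_pos _).le
    _ = K * (f 0 * exp (1 - t / K)) := mul_assoc ..
end

section
/- Let (U, μ) be a measure space with μ(U) < ∞, let p > 1, set r = (2p+2)/(2p+1), and let f : U → ℝ be measurable with ∫_U |f|^{p+1} dμ ≤ M for some constant M ≥ 0. Then ∫_U ( |f|^p · |log|f|| )^r dμ ≤ μ(U)/(p·e)^r + (2/e)^r · M, with the convention that |f|^p·log|f| = 0 wherever f = 0. -/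
/-!
Pointwise, `t ^ p * |log t|` is bounded by `1 / (p e)` for `t ≤ 1` and by `(2 / e) t ^ (p + 1/2)` for
`t ≥ 1`; both follow from `e x ≤ exp x`, applied at `x = -p log t` and at `x = log t / 2`. Since
`(p + 1/2) r = p + 1`, raising to the power `r` and integrating gives the bound.
-/

open MeasureTheory

namespace Real

lemma rpow_mul_abs_log_le_of_le_one {p t : ℝ} (hp : 0 < p) (ht₀ : 0 ≤ t) (ht₁ : t ≤ 1) :
    t ^ p * |log t| ≤ 1 / (p * exp 1) := by
  rcases ht₀.eq_or_lt with rfl | ht₀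
  · rw [zero_rpow hp.ne', zero_mul]
    positivity
  have hlog : log t ≤ 0 := log_nonpos ht₀.le ht₁
  have hpow : t ^ p = exp (p * log t) := by rw [rpow_def_of_pos ht₀, mul_comm]
  have key : exp 1 * -(p * log t) ≤ (t ^ p)⁻¹ := by
    rw [hpow, ← exp_neg]
    exact exp_one_mul_le_exp
  rw [abs_of_nonpos hlog, le_div_iff₀ (by positivity)]
  calc t ^ p * -log t * (p * exp 1) = t ^ p * (exp 1 * -(p * log t)) := by ring
    _ ≤ t ^ p * (t ^ p)⁻¹ := by gcongr
    _ = 1 := mul_inv_cancel₀ (rpow_pos_of_pos ht₀ p).ne'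

lemma rpow_mul_abs_log_le_of_one_le {p t : ℝ} (ht : 1 ≤ t) :
    t ^ p * |log t| ≤ 2 / exp 1 * t ^ (p + 1 / 2) := by
  have ht₀ : 0 < t := one_pos.trans_le ht
  have key : exp 1 * (log t / 2) ≤ t ^ (1 / 2 : ℝ) := by
    rw [rpow_def_of_pos ht₀, mul_one_div]
    exact exp_one_mul_le_exp
  rw [abs_of_nonneg (log_nonneg ht), rpow_add ht₀]
  calc t ^ p * log t = 2 / exp 1 * t ^ p * (exp 1 * (log t / 2)) := by
        field_simp
    _ ≤ 2 / exp 1 * t ^ p * t ^ (1 / 2 : ℝ) := by gcongr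
    _ = 2 / exp 1 * (t ^ p * t ^ (1 / 2 : ℝ)) := by ring

lemma rpow_mul_abs_log_rpow_le {p r t : ℝ} (hp : 0 < p) (hr : 0 ≤ r) (ht : 0 ≤ t) :
    (t ^ p * |log t|) ^ r ≤ 1 / (p * exp 1) ^ r + (2 / exp 1) ^ r * t ^ ((p + 1 / 2) * r) := by
  rcases le_total t 1 with ht₁ | ht₁
  · have hsmall : (t ^ p * |log t|) ^ r ≤ 1 / (p * exp 1) ^ r := by
      rw [← one_rpow r, ← div_rpow zero_le_one (by positivity), one_rpow]
      exact rpow_le_rpow (by positivity) (rpow_mul_abs_log_le_of_le_one hp ht ht₁) hr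
    have : 0 ≤ (2 / exp 1) ^ r * t ^ ((p + 1 / 2) * r) := by positivity
    linarith
  · have hlarge : (t ^ p * |log t|) ^ r ≤ (2 / exp 1) ^ r * t ^ ((p + 1 / 2) * r) := by
      rw [rpow_mul ht, ← mul_rpow (by positivity) (by positivity)]
      exact rpow_le_rpow (by positivity) (rpow_mul_abs_log_le_of_one_le ht₁) hr
    have : 0 ≤ 1 / (p * exp 1) ^ r := by positivity
    linarith

end Real

theorem stmt_4_general {U : Type*} [MeasurableSpace U] (μ : Measure U) [IsFiniteMeasure μ]
    (p r : ℝ) (hp : 1 < p) (hr : r = (2 * p + 2) / (2 * p + 1))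
    (f : U → ℝ) (M : ℝ)
    (hint : Integrable (fun x => |f x| ^ (p + 1)) μ)
    (hbound : ∫ x, |f x| ^ (p + 1) ∂μ ≤ M) :
    ∫ x, (|f x| ^ p * (abs (Real.log |f x|))) ^ r ∂μ ≤
      (μ Set.univ).toReal / (p * Real.exp 1) ^ r + (2 / Real.exp 1) ^ r * M := by
  have hp₀ : 0 < p := by linarith
  have hr₀ : 0 ≤ r := by rw [hr]; positivity
  have hexp : (p + 1 / 2) * r = p + 1 := by
    rw [hr]
    field_simp
  set c₁ : ℝ := 1 / (p * Real.exp 1) ^ r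
  set c₂ : ℝ := (2 / Real.exp 1) ^ r
  have hpointwise : ∀ x, (|f x| ^ p * |Real.log (|f x|)|) ^ r ≤ c₁ + c₂ * |f x| ^ (p + 1) := by
    intro x
    rw [← hexp]
    exact Real.rpow_mul_abs_log_rpow_le hp₀ hr₀ (abs_nonneg _)
  calc ∫ x, (|f x| ^ p * |Real.log (|f x|)|) ^ r ∂μ
      ≤ ∫ x, (c₁ + c₂ * |f x| ^ (p + 1)) ∂μ :=
        integral_mono_of_nonneg (.of_forall fun _ => by positivity)
          ((integrable_const c₁).add (hint.const_mul c₂)) (.of_forall hpointwise)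
    _ = (μ Set.univ).toReal * c₁ + c₂ * ∫ x, |f x| ^ (p + 1) ∂μ := by
        rw [integral_add (integrable_const c₁) (hint.const_mul c₂), integral_const,
          integral_const_mul, smul_eq_mul, measureReal_def]
    _ ≤ (μ Set.univ).toReal * c₁ + c₂ * M := by gcongr
    _ = (μ Set.univ).toReal / (p * Real.exp 1) ^ r + c₂ * M := by rw [mul_one_div]

/-- Uniform `L^r` bound for the nonlinearity: if `μ` is a finite measure, `p > 1`,
`r = (2p+2)/(2p+1)`, `f` is measurable with `∫ |f|^(p+1) dμ ≤ M` (and the integrand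
is integrable), then `∫ (|f|^p · |log |f||)^r dμ ≤ μ(U)/(pe)^r + (2/e)^r · M`.
(Since `Real.log 0 = 0` and `0 ^ p = 0` for `p > 0`, the integrand vanishes where `f = 0`.) -/
theorem stmt_4 {U : Type*} [MeasurableSpace U] (μ : Measure U) [IsFiniteMeasure μ]
    (p r : ℝ) (hp : 1 < p) (hr : r = (2 * p + 2) / (2 * p + 1))
    (f : U → ℝ) (hf : Measurable f) (M : ℝ) (hM : 0 ≤ M)
    (hint : Integrable (fun x => |f x| ^ (p + 1)) μ)
    (hbound : ∫ x, |f x| ^ (p + 1) ∂μ ≤ M) :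
    ∫ x, (|f x| ^ p * (abs (Real.log |f x|))) ^ r ∂μ ≤
      (μ Set.univ).toReal / (p * Real.exp 1) ^ r + (2 / Real.exp 1) ^ r * M :=
  stmt_4_general μ p r hp hr f M hint hbound
end

section
/- Let p > 1, a > 0, b > 0 and c ∈ ℝ. Then there exists a unique ζ* > 0 such that a·ζ* − (ζ*)^p·(c + b·log ζ*) = 0; equivalently, the function g(ζ) = (a/2)·ζ² − (1/(p+1))·ζ^{p+1}·(c + b·log ζ) + (b/(p+1)²)·ζ^{p+1} has exactly one critical point on (0,∞). -/
/-!
Substituting `ζ = exp t` and dividing by `ζ ^ p > 0`, the equation becomes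
`a * exp ((1 - p) * t) = c + b * t`. For `p ≥ 1` the left side is nonnegative and antitone while the
right side is a strictly increasing affine function, so their difference is a continuous, strictly
decreasing function of `t` running from `+∞` to `-∞`, and it vanishes exactly once.
-/

open Real Filter

namespace FiberingMap

/-- `ζ ^ (-p) * (a * ζ - ζ ^ p * (c + b * log ζ))` written in the variable `t = log ζ`. -/
noncomputable def reducedDeriv (p a b c t : ℝ) : ℝ :=
  a * exp ((1 - p) * t) - (c + b * t)

variable {p a b c : ℝ}

lemma exp_mul_reducedDeriv (t : ℝ) :
    exp (p * t) * reducedDeriv p a b c t = a * exp t - exp t ^ p * (c + b * log (exp t)) := by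
  rw [rpow_def_of_pos (exp_pos t), log_exp, reducedDeriv, mul_sub, mul_left_comm, ← exp_add]
  ring_nf

lemma continuous_reducedDeriv : Continuous (reducedDeriv p a b c) := by
  unfold reducedDeriv
  fun_prop

lemma strictAnti_reducedDeriv (hp : 1 ≤ p) (ha : 0 ≤ a) (hb : 0 < b) :
    StrictAnti (reducedDeriv p a b c) := by
  intro s t hst
  have hexp : exp ((1 - p) * t) ≤ exp ((1 - p) * s) :=
    exp_le_exp.mpr (mul_le_mul_of_nonpos_left hst.le (by linarith))
  have := mul_le_mul_of_nonneg_left hexp ha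
  unfold reducedDeriv
  nlinarith

lemma tendsto_reducedDeriv_atBot (ha : 0 ≤ a) (hb : 0 < b) :
    Tendsto (reducedDeriv p a b c) atBot atTop := by
  have hlin : Tendsto (fun t => -c + -b * t) atBot atTop :=
    tendsto_atTop_add_const_left _ _ (tendsto_id.const_mul_atBot_of_neg (neg_neg_of_pos hb))
  refine tendsto_atTop_mono (fun t => ?_) hlin
  have := mul_nonneg ha (exp_pos ((1 - p) * t)).le
  unfold reducedDeriv
  linarith

lemma tendsto_reducedDeriv_atTop (hp : 1 ≤ p) (ha : 0 ≤ a) (hb : 0 < b) :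
    Tendsto (reducedDeriv p a b c) atTop atBot := by
  have hlin : Tendsto (fun t => (a - c) + -b * t) atTop atBot :=
    tendsto_atBot_add_const_left _ _ (tendsto_id.const_mul_atTop_of_neg (neg_neg_of_pos hb))
  refine tendsto_atBot_mono' _ ?_ hlin
  filter_upwards [eventually_ge_atTop 0] with t ht
  have hexp : exp ((1 - p) * t) ≤ 1 :=
    exp_le_one_iff.mpr (mul_nonpos_of_nonpos_of_nonneg (by linarith) ht)
  have := mul_le_mul_of_nonneg_left hexp ha
  unfold reducedDeriv
  linarith

lemma existsUnique_reducedDeriv_eq_zero (hp : 1 ≤ p) (ha : 0 ≤ a) (hb : 0 < b) :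
    ∃! t, reducedDeriv p a b c t = 0 := by
  obtain ⟨t, ht⟩ := continuous_reducedDeriv.surjective' (tendsto_reducedDeriv_atBot ha hb)
    (tendsto_reducedDeriv_atTop hp ha hb) 0
  exact ⟨t, ht, fun s hs => (strictAnti_reducedDeriv hp ha hb).injective (hs.trans ht.symm)⟩

end FiberingMap

open Real Filter FiberingMap

/-- There exists a unique `ζ* > 0` with `a·ζ* − (ζ*)^p (c + b log ζ*) = 0`,
i.e. the fibering map has exactly one critical point on `(0, ∞)`. -/
theorem stmt_7 (p a b c : ℝ) (hp : 1 < p) (ha : 0 < a) (hb : 0 < b) :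
    ∃! ζ : ℝ, 0 < ζ ∧ a * ζ - ζ ^ p * (c + b * Real.log ζ) = 0 := by
  obtain ⟨t, ht, huniq⟩ := existsUnique_reducedDeriv_eq_zero (c := c) hp.le ha.le hb
  refine ⟨exp t, ⟨exp_pos t, by rw [← exp_mul_reducedDeriv, ht, mul_zero]⟩, ?_⟩
  rintro ζ ⟨hζ, hζeq⟩
  rw [← exp_log hζ, ← exp_mul_reducedDeriv] at hζeq
  rw [← exp_log hζ, huniq _ ((mul_eq_zero_iff_left (exp_pos _).ne').mp hζeq)]
end

section
/- Let p > 1, a > 0, b > 0 and c ∈ ℝ, define g : (0,∞) → ℝ by g(ζ) = (a/2)·ζ² − (1/(p+1))·ζ^{p+1}·(c + b·log ζ) + (b/(p+1)²)·ζ^{p+1}, and let ζ* > 0 be the unique zero of g′(ζ) = a·ζ − ζ^p·(c + b·log ζ). Then g′(ζ) > 0 for 0 < ζ < ζ*, g′(ζ) < 0 for ζ > ζ*; consequently g is strictly increasing on (0, ζ*], strictly decreasing on [ζ*, ∞), and attains its global maximum over (0,∞) at ζ = ζ*. -/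
/-! Since `g′(ζ) = ζ^p (a ζ^{1-p} - c - b log ζ)` and, for `p ≥ 1`, `a ≥ 0`, `b > 0`, the
bracket is strictly decreasing on `(0, ∞)`, `g′` changes sign exactly once, from `+` to `-`,
at its zero `ζ*`. -/

open Real Set

noncomputable section

def fiberingMap (a b c p ζ : ℝ) : ℝ :=
  a / 2 * ζ ^ (2 : ℝ) - 1 / (p + 1) * ζ ^ (p + 1) * (c + b * log ζ) + b / (p + 1) ^ 2 * ζ ^ (p + 1)

def fiberingDeriv (a b c p ζ : ℝ) : ℝ :=
  a * ζ - ζ ^ p * (c + b * log ζ)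

def reducedFiberingDeriv (a b c p ζ : ℝ) : ℝ :=
  a * ζ ^ (1 - p) - (c + b * log ζ)

end

namespace Fibering

variable {a b c p ζ ζs : ℝ}

theorem hasDerivAt_fiberingMap (hp : p + 1 ≠ 0) (hζ : 0 < ζ) :
    HasDerivAt (fiberingMap a b c p) (fiberingDeriv a b c p ζ) ζ := by
  have hsq : HasDerivAt (fun x : ℝ => x ^ (2 : ℝ)) (2 * ζ ^ ((2 : ℝ) - 1)) ζ :=
    hasDerivAt_rpow_const (Or.inl hζ.ne')
  have hpow : HasDerivAt (fun x : ℝ => x ^ (p + 1)) ((p + 1) * ζ ^ (p + 1 - 1)) ζ :=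
    hasDerivAt_rpow_const (Or.inl hζ.ne')
  have hlog : HasDerivAt (fun x : ℝ => c + b * log x) (b * ζ⁻¹) ζ :=
    ((hasDerivAt_log hζ.ne').const_mul b).const_add c
  refine (((hsq.const_mul (a / 2)).sub ((hpow.const_mul (1 / (p + 1))).mul hlog)).add
    (hpow.const_mul (b / (p + 1) ^ 2))).congr_deriv ?_
  rw [show ζ ^ ((2 : ℝ) - 1) = ζ by norm_num, add_sub_cancel_right,
    rpow_add hζ, rpow_one, fiberingDeriv]
  field_simp
  ring

theorem fiberingDeriv_eq_rpow_mul (hζ : 0 < ζ) :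
    fiberingDeriv a b c p ζ = ζ ^ p * reducedFiberingDeriv a b c p ζ := by
  have hmul : ζ ^ p * ζ ^ (1 - p) = ζ := by rw [← rpow_add hζ, add_sub_cancel, rpow_one]
  rw [fiberingDeriv, reducedFiberingDeriv, mul_sub, mul_left_comm, hmul]

theorem strictAntiOn_reducedFiberingDeriv (ha : 0 ≤ a) (hp : 1 ≤ p) (hb : 0 < b) :
    StrictAntiOn (reducedFiberingDeriv a b c p) (Ioi 0) := by
  intro x hx y _ hxy
  have hrpow : a * y ^ (1 - p) ≤ a * x ^ (1 - p) :=
    mul_le_mul_of_nonneg_left (rpow_le_rpow_of_nonpos hx hxy.le (by linarith)) ha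
  have hlog : b * log x < b * log y := mul_lt_mul_of_pos_left (log_lt_log hx hxy) hb
  simp only [reducedFiberingDeriv]
  linarith

theorem reducedFiberingDeriv_eq_zero (hζs : 0 < ζs) (hcrit : fiberingDeriv a b c p ζs = 0) :
    reducedFiberingDeriv a b c p ζs = 0 := by
  rw [fiberingDeriv_eq_rpow_mul hζs] at hcrit
  exact (mul_eq_zero.mp hcrit).resolve_left (rpow_pos_of_pos hζs p).ne'

section Sign

variable (ha : 0 ≤ a) (hp : 1 ≤ p) (hb : 0 < b) (hζs : 0 < ζs)
  (hcrit : fiberingDeriv a b c p ζs = 0)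
include ha hp hb hζs hcrit

theorem fiberingDeriv_pos_of_lt (hζ : 0 < ζ) (hlt : ζ < ζs) : 0 < fiberingDeriv a b c p ζ := by
  rw [fiberingDeriv_eq_rpow_mul hζ]
  refine mul_pos (rpow_pos_of_pos hζ p) ?_
  rw [← reducedFiberingDeriv_eq_zero hζs hcrit]
  exact strictAntiOn_reducedFiberingDeriv ha hp hb hζ hζs hlt

theorem fiberingDeriv_neg_of_gt (hgt : ζs < ζ) : fiberingDeriv a b c p ζ < 0 := by
  have hζ : 0 < ζ := hζs.trans hgt
  rw [fiberingDeriv_eq_rpow_mul hζ]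
  refine mul_neg_of_pos_of_neg (rpow_pos_of_pos hζ p) ?_
  rw [← reducedFiberingDeriv_eq_zero hζs hcrit]
  exact strictAntiOn_reducedFiberingDeriv ha hp hb hζs hζ hgt

theorem strictMonoOn_fiberingMap : StrictMonoOn (fiberingMap a b c p) (Ioc 0 ζs) := by
  have hp' : p + 1 ≠ 0 := by linarith
  refine strictMonoOn_of_deriv_pos (convex_Ioc 0 ζs)
    (fun x hx => (hasDerivAt_fiberingMap hp' hx.1).continuousAt.continuousWithinAt) ?_
  intro x hx
  rw [interior_Ioc] at hx
  rw [(hasDerivAt_fiberingMap hp' hx.1).deriv]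
  exact fiberingDeriv_pos_of_lt ha hp hb hζs hcrit hx.1 hx.2

theorem strictAntiOn_fiberingMap : StrictAntiOn (fiberingMap a b c p) (Ici ζs) := by
  have hp' : p + 1 ≠ 0 := by linarith
  refine strictAntiOn_of_deriv_neg (convex_Ici ζs)
    (fun x hx => (hasDerivAt_fiberingMap hp' (hζs.trans_le hx)).continuousAt.continuousWithinAt) ?_
  intro x hx
  rw [interior_Ici] at hx
  rw [(hasDerivAt_fiberingMap hp' (hζs.trans hx)).deriv]
  exact fiberingDeriv_neg_of_gt ha hp hb hζs hcrit hx

end Sign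

end Fibering

open Fibering in
/-- If `ζ* > 0` is the zero of `g′(ζ) = aζ − ζ^p (c + b log ζ)`, then `g′ > 0` on
`(0, ζ*)`, `g′ < 0` on `(ζ*, ∞)`; hence the fibering map `g` is strictly increasing on
`(0, ζ*]`, strictly decreasing on `[ζ*, ∞)`, and attains its global maximum over
`(0, ∞)` at `ζ*`. -/
theorem stmt_8 (p a b c : ℝ) (hp : 1 < p) (ha : 0 < a) (hb : 0 < b)
    (g : ℝ → ℝ)
    (hg : ∀ ζ : ℝ, g ζ = a / 2 * ζ ^ (2 : ℝ)
        - 1 / (p + 1) * ζ ^ (p + 1) * (c + b * Real.log ζ)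
        + b / (p + 1) ^ 2 * ζ ^ (p + 1))
    (ζs : ℝ) (hζs : 0 < ζs)
    (hcrit : a * ζs - ζs ^ p * (c + b * Real.log ζs) = 0) :
    (∀ ζ : ℝ, 0 < ζ → ζ < ζs → 0 < a * ζ - ζ ^ p * (c + b * Real.log ζ)) ∧
    (∀ ζ : ℝ, ζs < ζ → a * ζ - ζ ^ p * (c + b * Real.log ζ) < 0) ∧
    StrictMonoOn g (Set.Ioc 0 ζs) ∧
    StrictAntiOn g (Set.Ici ζs) ∧
    (∀ ζ : ℝ, 0 < ζ → g ζ ≤ g ζs) := by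
  obtain rfl : g = fiberingMap a b c p := funext hg
  have hmono := strictMonoOn_fiberingMap ha.le hp.le hb hζs hcrit
  have hanti := strictAntiOn_fiberingMap ha.le hp.le hb hζs hcrit
  refine ⟨fun ζ hζ hlt => fiberingDeriv_pos_of_lt ha.le hp.le hb hζs hcrit hζ hlt,
    fun ζ hgt => fiberingDeriv_neg_of_gt ha.le hp.le hb hζs hcrit hgt, hmono, hanti, ?_⟩
  intro ζ hζ
  rcases le_or_gt ζ ζs with hle | hgt
  · exact hmono.monotoneOn ⟨hζ, hle⟩ ⟨hζs, le_rfl⟩ hle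
  · exact (hanti self_mem_Ici hgt.le hgt).le
end

section
/- Let p > 1, a > 0, b > 0 and c ∈ ℝ with a ≥ c, define g : (0,∞) → ℝ by g(ζ) = (a/2)·ζ² − (1/(p+1))·ζ^{p+1}·(c + b·log ζ) + (b/(p+1)²)·ζ^{p+1}, and let ζ* > 0 be the unique zero of g′(ζ) = a·ζ − ζ^p·(c + b·log ζ). Then ζ* ≥ 1, and for every μ with 0 < μ < 1 one has g(μ) < g(1) and μ·g′(μ) > 0. -/
/-!
For `0 < ζ < 1` we have `ζ^p < ζ` (as `p > 1`), `c ≤ a` and `log ζ < 0`, hence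
`g′(ζ) = aζ − ζ^p (c + b log ζ) ≥ a (ζ − ζ^p) > 0`. So the critical point cannot lie below `1`,
and `g` increases strictly on `(0, 1]`.
-/

open Real Set

theorem hasDerivAt_fibering {p : ℝ} (a b c : ℝ) (hp : p + 1 ≠ 0) {x : ℝ} (hx : 0 < x) :
    HasDerivAt (fun ζ : ℝ => a / 2 * ζ ^ (2 : ℝ) - 1 / (p + 1) * ζ ^ (p + 1) * (c + b * log ζ)
        + b / (p + 1) ^ 2 * ζ ^ (p + 1))
      (a * x - x ^ p * (c + b * log x)) x := by
  have hsq : HasDerivAt (fun ζ : ℝ => ζ ^ (2 : ℝ)) (2 * x ^ ((2 : ℝ) - 1)) x :=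
    hasDerivAt_rpow_const (Or.inl hx.ne')
  have hpow : HasDerivAt (fun ζ : ℝ => ζ ^ (p + 1)) ((p + 1) * x ^ (p + 1 - 1)) x :=
    hasDerivAt_rpow_const (Or.inl hx.ne')
  have hlog : HasDerivAt (fun ζ => c + b * log ζ) (b * x⁻¹) x :=
    ((hasDerivAt_log hx.ne').const_mul b).const_add c
  refine (((hsq.const_mul (a / 2)).sub ((hpow.const_mul (1 / (p + 1))).mul hlog)).add
    (hpow.const_mul (b / (p + 1) ^ 2))).congr_deriv ?_
  rw [show (2 : ℝ) - 1 = 1 by norm_num, add_sub_cancel_right, rpow_one, rpow_add_one hx.ne']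
  field_simp
  ring

theorem fiberingDeriv_pos {p a b c μ : ℝ} (hp : 1 < p) (ha : 0 < a) (hb : 0 ≤ b) (hac : c ≤ a)
    (hμ : 0 < μ) (hμ1 : μ < 1) : 0 < a * μ - μ ^ p * (c + b * log μ) := by
  have hlog : log μ < 0 := log_neg hμ hμ1
  have hμp : 0 < μ ^ p := rpow_pos_of_pos hμ p
  have hlt : μ ^ p < μ := by simpa using rpow_lt_rpow_of_exponent_gt hμ hμ1 hp
  nlinarith [mul_pos ha (sub_pos.2 hlt), mul_nonneg hμp.le (sub_nonneg.2 hac),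
    mul_nonneg hμp.le (mul_nonneg hb (neg_pos.2 hlog).le)]

theorem strictMonoOn_fibering {p a b c : ℝ} (hp : 1 < p) (ha : 0 < a) (hb : 0 ≤ b)
    (hac : c ≤ a) :
    StrictMonoOn (fun ζ : ℝ => a / 2 * ζ ^ (2 : ℝ)
        - 1 / (p + 1) * ζ ^ (p + 1) * (c + b * log ζ) + b / (p + 1) ^ 2 * ζ ^ (p + 1))
      (Ioc 0 1) := by
  have hderiv := fun x (hx : 0 < x) => hasDerivAt_fibering a b c (by linarith : p + 1 ≠ 0) hx
  refine strictMonoOn_of_hasDerivWithinAt_pos (f' := fun x => a * x - x ^ p * (c + b * log x))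
    (convex_Ioc 0 1) (fun x hx => (hderiv x hx.1).continuousAt.continuousWithinAt)
    (fun x hx => ?_) (fun x hx => ?_) <;> rw [interior_Ioc] at hx
  · exact (hderiv x hx.1).hasDerivWithinAt
  · exact fiberingDeriv_pos hp ha hb hac hx.1 hx.2

theorem stmt_9_general (p a b c : ℝ) (hp : 1 < p) (ha : 0 < a) (hb : 0 < b) (hac : c ≤ a)
    (g : ℝ → ℝ)
    (hg : ∀ ζ : ℝ, g ζ = a / 2 * ζ ^ (2 : ℝ)
        - 1 / (p + 1) * ζ ^ (p + 1) * (c + b * Real.log ζ)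
        + b / (p + 1) ^ 2 * ζ ^ (p + 1))
    (ζs : ℝ) (hζs : 0 < ζs)
    (hcrit : a * ζs - ζs ^ p * (c + b * Real.log ζs) = 0) :
    1 ≤ ζs ∧
    ∀ μ : ℝ, 0 < μ → μ < 1 →
      g μ < g 1 ∧ 0 < μ * (a * μ - μ ^ p * (c + b * Real.log μ)) := by
  have hpos := fun μ (hμ : 0 < μ) hμ1 => fiberingDeriv_pos hp ha hb.le hac hμ hμ1
  refine ⟨not_lt.1 fun h => (hpos ζs hζs h).ne' hcrit,
    fun μ hμ hμ1 => ⟨?_, mul_pos hμ (hpos μ hμ hμ1)⟩⟩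
  rw [hg, hg]
  exact strictMonoOn_fibering hp ha hb.le hac ⟨hμ, hμ1.le⟩ ⟨one_pos, le_rfl⟩ hμ1

/-- If `a ≥ c` and `ζ* > 0` is the unique zero of `g′(ζ) = aζ − ζ^p (c + b log ζ)`,
then `ζ* ≥ 1`, and for every `0 < μ < 1` one has `g(μ) < g(1)` and `μ·g′(μ) > 0`. -/
theorem stmt_9 (p a b c : ℝ) (hp : 1 < p) (ha : 0 < a) (hb : 0 < b) (hac : c ≤ a)
    (g : ℝ → ℝ)
    (hg : ∀ ζ : ℝ, g ζ = a / 2 * ζ ^ (2 : ℝ)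
        - 1 / (p + 1) * ζ ^ (p + 1) * (c + b * Real.log ζ)
        + b / (p + 1) ^ 2 * ζ ^ (p + 1))
    (ζs : ℝ) (hζs : 0 < ζs)
    (hcrit : a * ζs - ζs ^ p * (c + b * Real.log ζs) = 0)
    (huniq : ∀ ζ : ℝ, 0 < ζ → a * ζ - ζ ^ p * (c + b * Real.log ζ) = 0 → ζ = ζs) :
    1 ≤ ζs ∧
    ∀ μ : ℝ, 0 < μ → μ < 1 →
      g μ < g 1 ∧ 0 < μ * (a * μ - μ ^ p * (c + b * Real.log μ)) :=
  stmt_9_general p a b c hp ha hb hac g hg ζs hζs hcrit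
end

section
/- Let α > 1, t₀ ∈ ℝ and T ∈ (t₀, ∞], and let N : [t₀, T) → ℝ be twice differentiable with N(t) > 0, N′(t) > 0 and N(t)·N″(t) − α·(N′(t))² ≥ 0 for all t ∈ [t₀, T). Then for every t ∈ [t₀, T), N(t)^{1−α} ≤ N(t₀)^{1−α} · ( 1 − (α−1)·(N′(t₀)/N(t₀))·(t − t₀) ). In particular, T ≤ t₀ + N(t₀)/((α−1)·N′(t₀)). -/
/-!
For `M = N ^ (1 - α)` one has `M' = (1 - α) N ^ (-α) N'` and
`(N ^ (-α) N')' = N ^ (-α - 1) (N N'' - α N'²) ≥ 0`; since `1 - α < 0`, `M'` is antitone, so `M`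
lies below its tangent line at `t₀`. That line vanishes at `t₀ + N(t₀) / ((α - 1) N'(t₀))`
(which lies to the right of `t₀` because `N'(t₀) > 0`), whereas `M > 0` wherever `N` is defined.
-/

open Set

theorem le_tangent_of_antitoneOn_deriv {D : Set ℝ} (hD : Convex ℝ D) {f f' : ℝ → ℝ}
    (hf : ∀ x ∈ D, HasDerivWithinAt f (f' x) D x) (hf' : AntitoneOn f' D)
    {a b : ℝ} (ha : a ∈ D) (hb : b ∈ D) (hab : a ≤ b) :
    f b ≤ f a + f' a * (b - a) := by
  have hI : Icc a b ⊆ D := hD.ordConnected.out ha hb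
  let g : ℝ → ℝ := fun x => f a + f' a * (x - a) - f x
  have hg : ∀ x ∈ Icc a b, HasDerivWithinAt g (f' a - f' x) (Icc a b) x := fun x hx =>
    (((((hasDerivWithinAt_id x _).sub_const a).const_mul (f' a)).const_add (f a)).sub
      ((hf x (hI hx)).mono hI)).congr_deriv (by simp)
  have hg_mono : MonotoneOn g (Icc a b) := by
    refine monotoneOn_of_hasDerivWithinAt_nonneg (convex_Icc a b)
      (fun x hx => (hg x hx).continuousWithinAt)
      (fun x hx => (hg x (interior_subset hx)).mono interior_subset) fun x hx => ?_
    rw [interior_Icc] at hx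
    exact sub_nonneg.mpr <| hf' ha (hI (Ioo_subset_Icc_self hx)) hx.1.le
  have : g a ≤ g b := hg_mono (left_mem_Icc.mpr hab) (right_mem_Icc.mpr hab) hab
  simp only [g, sub_self, mul_zero, add_zero] at this
  linarith

theorem HasDerivWithinAt.rpow_neg_mul {N N' : ℝ → ℝ} {D : Set ℝ} {x n'' α : ℝ}
    (hN : HasDerivWithinAt N (N' x) D x) (hN' : HasDerivWithinAt N' n'' D x) (hpos : 0 < N x) :
    HasDerivWithinAt (fun s => N s ^ (-α) * N' s)
      (N x ^ (-α - 1) * (N x * n'' - α * N' x ^ 2)) D x := by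
  have hsplit : N x ^ (-α) = N x ^ (-α - 1) * N x := by
    rw [← Real.rpow_add_one hpos.ne']; ring_nf
  refine ((hN.rpow_const (p := -α) (Or.inl hpos.ne')).mul hN').congr_deriv ?_
  rw [hsplit]; ring

theorem rpow_one_sub_le_tangent {N N' N'' : ℝ → ℝ} {D : Set ℝ} (hD : Convex ℝ D) {α : ℝ}
    (hα : 1 < α) (hd1 : ∀ t ∈ D, HasDerivWithinAt N (N' t) D t)
    (hd2 : ∀ t ∈ D, HasDerivWithinAt N' (N'' t) D t) (hpos : ∀ t ∈ D, 0 < N t)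
    (hconc : ∀ t ∈ D, 0 ≤ N t * N'' t - α * N' t ^ 2) {a b : ℝ} (ha : a ∈ D) (hb : b ∈ D)
    (hab : a ≤ b) :
    N b ^ (1 - α) ≤ N a ^ (1 - α) * (1 - (α - 1) * (N' a / N a) * (b - a)) := by
  have hP_mono : MonotoneOn (fun s => N s ^ (-α) * N' s) D :=
    monotoneOn_of_hasDerivWithinAt_nonneg hD
      (fun t ht => ((hd1 t ht).rpow_neg_mul (hd2 t ht) (hpos t ht)).continuousWithinAt)
      (fun t ht => ((hd1 t (interior_subset ht)).rpow_neg_mul (hd2 t (interior_subset ht))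
        (hpos t (interior_subset ht))).mono interior_subset)
      (fun t ht => mul_nonneg (Real.rpow_pos_of_pos (hpos t (interior_subset ht)) _).le
        (hconc t (interior_subset ht)))
  have hM'_anti : AntitoneOn (fun s => (1 - α) * (N s ^ (-α) * N' s)) D :=
    fun s hs t ht hst => mul_le_mul_of_nonpos_left (hP_mono hs ht hst) (by linarith)
  have hM : ∀ t ∈ D, HasDerivWithinAt (fun s => N s ^ (1 - α))
      ((1 - α) * (N t ^ (-α) * N' t)) D t := fun t ht =>
    ((hd1 t ht).rpow_const (Or.inl (hpos t ht).ne')).congr_deriv (by ring_nf)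
  have ha_pos := hpos a ha
  have hsplit : N a ^ (1 - α) = N a ^ (-α) * N a := by
    rw [← Real.rpow_add_one ha_pos.ne']; ring_nf
  calc N b ^ (1 - α) ≤ N a ^ (1 - α) + (1 - α) * (N a ^ (-α) * N' a) * (b - a) :=
        le_tangent_of_antitoneOn_deriv hD hM hM'_anti ha hb hab
    _ = N a ^ (1 - α) * (1 - (α - 1) * (N' a / N a) * (b - a)) := by
        rw [hsplit]; field_simp; ring

/-- Quantitative concavity blow-up estimate: if `α > 1`, `T ∈ (t₀, ∞]`, and `N` is
twice differentiable on `[t₀, T)` with `N > 0`, `N′ > 0` and `N·N″ − α·(N′)² ≥ 0`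
there, then `N^{1−α}` lies below its tangent line at `t₀`:
`N(t)^{1−α} ≤ N(t₀)^{1−α}·(1 − (α−1)(N′(t₀)/N(t₀))(t − t₀))` for all `t ∈ [t₀, T)`;
in particular `T ≤ t₀ + N(t₀)/((α−1)·N′(t₀))`. -/
theorem stmt_11 (α t₀ : ℝ) (hα : 1 < α) (T : EReal) (hT : (t₀ : EReal) < T)
    (N N' N'' : ℝ → ℝ)
    (hd1 : ∀ t : ℝ, t₀ ≤ t → (t : EReal) < T →
      HasDerivWithinAt N (N' t) {s : ℝ | t₀ ≤ s ∧ (s : EReal) < T} t)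
    (hd2 : ∀ t : ℝ, t₀ ≤ t → (t : EReal) < T →
      HasDerivWithinAt N' (N'' t) {s : ℝ | t₀ ≤ s ∧ (s : EReal) < T} t)
    (hpos : ∀ t : ℝ, t₀ ≤ t → (t : EReal) < T → 0 < N t)
    (hpos' : ∀ t : ℝ, t₀ ≤ t → (t : EReal) < T → 0 < N' t)
    (hconc : ∀ t : ℝ, t₀ ≤ t → (t : EReal) < T → 0 ≤ N t * N'' t - α * N' t ^ 2) :
    (∀ t : ℝ, t₀ ≤ t → (t : EReal) < T →
      N t ^ (1 - α) ≤ N t₀ ^ (1 - α) * (1 - (α - 1) * (N' t₀ / N t₀) * (t - t₀))) ∧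
    T ≤ ((t₀ + N t₀ / ((α - 1) * N' t₀) : ℝ) : EReal) := by
  set D := {s : ℝ | t₀ ≤ s ∧ (s : EReal) < T}
  have hD : Convex ℝ D := OrdConnected.convex ⟨fun x hx _ hy z hz =>
    ⟨hx.1.trans hz.1, (EReal.coe_le_coe_iff.mpr hz.2).trans_lt hy.2⟩⟩
  have htangent : ∀ t : ℝ, t₀ ≤ t → (t : EReal) < T →
      N t ^ (1 - α) ≤ N t₀ ^ (1 - α) * (1 - (α - 1) * (N' t₀ / N t₀) * (t - t₀)) :=
    fun t ht htT => rpow_one_sub_le_tangent hD hα (fun s hs => hd1 s hs.1 hs.2)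
      (fun s hs => hd2 s hs.1 hs.2) (fun s hs => hpos s hs.1 hs.2)
      (fun s hs => hconc s hs.1 hs.2) ⟨le_rfl, hT⟩ ⟨ht, htT⟩ ht
  refine ⟨htangent, not_lt.mp fun hlt => ?_⟩
  set t₁ := t₀ + N t₀ / ((α - 1) * N' t₀)
  have hN₀ := hpos t₀ le_rfl hT
  have hN'₀ := hpos' t₀ le_rfl hT
  have ht₁ : t₀ ≤ t₁ := le_add_of_nonneg_right (by have := sub_pos.mpr hα; positivity)
  have hvanish : 1 - (α - 1) * (N' t₀ / N t₀) * (t₁ - t₀) = 0 := by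
    simp only [t₁, add_sub_cancel_left]
    field_simp [(sub_pos.mpr hα).ne']
    ring
  have := htangent t₁ ht₁ hlt
  rw [hvanish, mul_zero] at this
  exact this.not_gt (Real.rpow_pos_of_pos (hpos t₁ ht₁ hlt) _)
end
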